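/- The sequence (2/3^(n+1))·ln f(n) is monotonically decreasing in n (for n ≥ 1), where f is the SG_2 acyclic-orientation count sequence. -/
import Mathlib


/-- One step of the recursion of Lemma 1 of the paper for the numbers of classes
of acyclic orientations on the two-dimensional Sierpinski gasket `SG_2(n)`:
given the quadruple `(a, b, c, d)` at stage `n`, produce the quadruple at
stage `n+1`. -/
def sg2Step : ℕ × ℕ × ℕ × ℕ → ℕ × ℕ × ℕ × ℕ := fun (a, b, c, d) =>
  (5*a^3 + 8*a^2*b + 6*a^2*c + 3*a*b^2 + 4*a*b*c + a*c^2,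
   12*a^3 + 35*a^2*b + 24*a^2*c + 30*a*b^2 + 34*a*b*c + 4*a*c^2 + 8*b^3 + 12*b^2*c + 3*b*c^2,
   6*a^3 + 26*a^2*b + 39*a^2*c + 9*a^2*d + 30*a*b^2 + 76*a*b*c + 12*a*b*d + 40*a*c^2
     + 6*a*c*d + 10*b^3 + 33*b^2*c + 4*b^2*d + 30*b*c^2 + 4*b*c*d + 7*c^3 + c^2*d,
   24*a^3 + 126*a^2*b + 180*a^2*c + 54*a^2*d + 198*a*b^2 + 540*a*b*c + 144*a*b*d
     + 360*a*c^2 + 180*a*c*d + 18*a*d^2 + 92*b^3 + 354*b^2*c + 84*b^2*d + 438*b*c^2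
     + 192*b*c*d + 18*b*d^2 + 172*c^3 + 102*c^2*d + 18*c*d^2 + d^3)

/-- The quadruple `(a_2(n), b_2(n), c_2(n), d_2(n))` with initial values
`(1, 0, 0, 0)` at stage `0`. -/
def sg2Seq (n : ℕ) : ℕ × ℕ × ℕ × ℕ := sg2Step^[n] (1, 0, 0, 0)

def a2 (n : ℕ) : ℕ := (sg2Seq n).1
def b2 (n : ℕ) : ℕ := (sg2Seq n).2.1
def c2 (n : ℕ) : ℕ := (sg2Seq n).2.2.1
def d2 (n : ℕ) : ℕ := (sg2Seq n).2.2.2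

/-- The number of acyclic orientations of `SG_2(n)`. -/
def f2 (n : ℕ) : ℕ := 6 * a2 n + 6 * b2 n + 6 * c2 n + d2 n

lemma sg2Seq_succ (n : ℕ) : sg2Seq (n + 1) = sg2Step (sg2Seq n) := by
  simp [sg2Seq, Function.iterate_succ_apply']

lemma a2_pos (n : ℕ) : 0 < a2 n := by
  induction n with
  | zero => simp [a2, sg2Seq]
  | succ n ih =>
    have h : a2 (n + 1) =
        5*(a2 n)^3 + 8*(a2 n)^2*(b2 n) + 6*(a2 n)^2*(c2 n) + 3*(a2 n)*(b2 n)^2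
          + 4*(a2 n)*(b2 n)*(c2 n) + (a2 n)*(c2 n)^2 := by
      simp only [a2, b2, c2, d2, sg2Seq_succ]
      rcases sg2Seq n with ⟨a, b, c, d⟩
      rfl
    have : 0 < 5 * (a2 n)^3 := by positivity
    omega

lemma key (n : ℕ) : f2 (n + 1) + 2 * (3 * a2 n + 2 * b2 n + c2 n)^3 = (f2 n)^3 := by
  have h : sg2Seq (n + 1) = sg2Step (sg2Seq n) := sg2Seq_succ n
  simp only [f2, a2, b2, c2, d2, h]
  rcases sg2Seq n with ⟨a, b, c, d⟩
  show 6 * _ + 6 * _ + 6 * _ + _ + _ = _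
  simp only [sg2Step]
  ring

lemma f2_lt (n : ℕ) : f2 (n + 1) < (f2 n)^3 := by
  have hk := key n
  have ha := a2_pos n
  nlinarith [pow_pos (by omega : 0 < 3 * a2 n + 2 * b2 n + c2 n) 3]

lemma f2_pos (n : ℕ) : 0 < f2 n := by
  have := a2_pos n; simp [f2]; omega

/-- the sequence `(2/3^(n+1))·ln f(n)` is strictly decreasing for `n ≥ 1`. -/
theorem sg2_upper_bound_decreasing (n : ℕ) (hn : 1 ≤ n) :
    (2 / 3 ^ (n + 2) : ℝ) * Real.log (f2 (n + 1)) < (2 / 3 ^ (n + 1) : ℝ) * Real.log (f2 n) := by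
  have h1 : (0 : ℝ) < f2 (n + 1) := by exact_mod_cast f2_pos (n + 1)
  have h2 : ((f2 (n + 1) : ℝ)) < ((f2 n : ℝ))^3 := by exact_mod_cast f2_lt n
  have hlog : Real.log (f2 (n + 1)) < 3 * Real.log (f2 n) := by
    calc Real.log (f2 (n + 1)) < Real.log (((f2 n : ℝ))^3) := Real.log_lt_log h1 h2
    _ = 3 * Real.log (f2 n) := by rw [Real.log_pow]; push_cast; ring
  have hc : (0 : ℝ) < 2 / 3 ^ (n + 2) := by positivity
  have := mul_lt_mul_of_pos_left hlog hc
  calc (2 / 3 ^ (n + 2) : ℝ) * Real.log (f2 (n + 1))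
      < (2 / 3 ^ (n + 2) : ℝ) * (3 * Real.log (f2 n)) := this
    _ = (2 / 3 ^ (n + 1) : ℝ) * Real.log (f2 n) := by
        rw [pow_succ]; ring
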